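/- Let Q be the quiver on two vertices i → j with k ≥ 2 arrows. Then for every N ≥ 1, the element (μᵢμⱼ)^N does not fix the labelled seed (Q, β); equivalently, the mutation class of (Q, β) under ⟨μᵢ, μⱼ⟩ is infinite. -/

import Mathlib

/-- A labelled seed of rank 2 over a field `F`: an integer `b` recording the
quiver (`b ≥ 0` means `b` arrows from vertex `0` to vertex `1`) and the
labelled cluster `β : Fin 2 → F`. -/
abbrev Seed2' (F : Type*) : Type _ := ℤ × (Fin 2 → F)

/-- Mutation of a rank 2 labelled seed at vertex `i`. -/
def mutate2 {F : Type*} [Field F] (i : Fin 2) (s : Seed2' F) : Seed2' F :=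
  let b := s.1
  let β := s.2
  let j : Fin 2 := if i = 0 then 1 else 0
  let ain : ℕ := ((if i = 1 then b else -b)).toNat   -- arrows `j → i`
  let aout : ℕ := ((if i = 1 then -b else b)).toNat  -- arrows `i → j`
  (-b, fun k => if k = i then (β j ^ ain + β j ^ aout) / β i else β k)

/-!
The alternating mutations produce the cluster variables `x₀ = β₀`, `x₁ = β₁`,
`xₙ₊₂ = (1 + xₙ₊₁ᵏ) / xₙ`. Since `β` is algebraically independent, every `xₙ` is a quotient of
polynomials in `β`, and specializing `β₀ ↦ t`, `β₁ ↦ t²` gives it a well-defined degree `cₙ`.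
The exchange relation yields `c₀ = 1`, `c₁ = 2`, `cₙ₊₂ = k cₙ₊₁ - cₙ`, which is strictly
increasing for `k ≥ 2`; so `x₂ₙ = β₀` (degree `1`) is impossible once `N ≥ 1`.
-/

open Polynomial

section SpecializedDegree

variable {R K F : Type*} [CommRing R] [Semiring K] [Field F]

/-- Reads `x = φ p / φ q` as having degree `deg (σ p) - deg (σ q)`; for injective `φ` this degree
does not depend on the choice of `p` and `q`. -/
def HasDegreeVia (φ : R →+* F) (σ : R →+* K[X]) (x : F) (d : ℤ) : Prop :=
  ∃ p q : R, σ p ≠ 0 ∧ σ q ≠ 0 ∧ x * φ q = φ p ∧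
    ((σ p).natDegree : ℤ) = (σ q).natDegree + d

variable {φ : R →+* F} {σ : R →+* K[X]} {x y : F} {d e : ℤ}

lemma hasDegreeVia_apply [Nontrivial K] {p : R} (hp : σ p ≠ 0) :
    HasDegreeVia φ σ (φ p) (σ p).natDegree :=
  ⟨p, 1, hp, by simp, by simp, by simp⟩

namespace HasDegreeVia

lemma mul [NoZeroDivisors K] (hx : HasDegreeVia φ σ x d) (hy : HasDegreeVia φ σ y e) :
    HasDegreeVia φ σ (x * y) (d + e) := by
  obtain ⟨p, q, hp, hq, hxpq, hd⟩ := hx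
  obtain ⟨p', q', hp', hq', hypq, he⟩ := hy
  refine ⟨p * p', q * q', by simpa using mul_ne_zero hp hp', by simpa using mul_ne_zero hq hq',
    by rw [map_mul, map_mul, ← hxpq, ← hypq]; ring, ?_⟩
  rw [map_mul, map_mul, natDegree_mul hp hp', natDegree_mul hq hq']
  push_cast
  linarith

lemma pow [NoZeroDivisors K] (hx : HasDegreeVia φ σ x d) (n : ℕ) :
    HasDegreeVia φ σ (x ^ n) (n * d) := by
  obtain ⟨p, q, hp, hq, hxpq, hd⟩ := hx
  refine ⟨p ^ n, q ^ n, by simpa using pow_ne_zero n hp, by simpa using pow_ne_zero n hq,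
    by rw [map_pow, map_pow, ← hxpq, mul_pow], ?_⟩
  rw [map_pow, map_pow, natDegree_pow, natDegree_pow]
  push_cast
  linear_combination (n : ℤ) * hd

lemma ne_zero (hφ : Function.Injective φ) (hx : HasDegreeVia φ σ x d) : x ≠ 0 := by
  rintro rfl
  obtain ⟨p, q, hp, -, hxpq, -⟩ := hx
  have : p = 0 := hφ (by rw [← hxpq, zero_mul, map_zero])
  exact hp (by rw [this, map_zero])

lemma inv (hφ : Function.Injective φ) (hx : HasDegreeVia φ σ x d) :
    HasDegreeVia φ σ x⁻¹ (-d) := by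
  have hx0 := hx.ne_zero hφ
  obtain ⟨p, q, hp, hq, hxpq, hd⟩ := hx
  exact ⟨q, p, hq, hp, by rw [← hxpq, ← mul_assoc, inv_mul_cancel₀ hx0, one_mul], by linarith⟩

/-- The leading term of `y` dominates the constant `1`. -/
lemma one_add (hy : HasDegreeVia φ σ y e) (he : 0 < e) : HasDegreeVia φ σ (1 + y) e := by
  obtain ⟨p, q, hp, hq, hypq, he'⟩ := hy
  have hlt : (σ q).natDegree < (σ p).natDegree := by omega
  have hdeg : (σ (q + p)).natDegree = (σ p).natDegree := by
    rw [map_add, natDegree_add_eq_right_of_natDegree_lt hlt]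
  refine ⟨q + p, q, fun h => ?_, hq, by rw [map_add, add_mul, one_mul, hypq], by rw [hdeg, he']⟩
  rw [h, natDegree_zero] at hdeg
  omega

lemma unique [NoZeroDivisors K] (hφ : Function.Injective φ) (hx : HasDegreeVia φ σ x d)
    (hx' : HasDegreeVia φ σ x e) : d = e := by
  obtain ⟨p, q, hp, hq, hxpq, hd⟩ := hx
  obtain ⟨p', q', hp', hq', hxpq', he⟩ := hx'
  have hcross : p * q' = p' * q := hφ (by rw [map_mul, map_mul, ← hxpq, ← hxpq']; ring)
  have hdeg := congrArg natDegree (congrArg σ hcross)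
  rw [map_mul, map_mul, natDegree_mul hp hq', natDegree_mul hp' hq] at hdeg
  omega

lemma exchange [NoZeroDivisors K] (hφ : Function.Injective φ) (hx : HasDegreeVia φ σ x d)
    (hy : HasDegreeVia φ σ y e) (he : 0 < e) {κ : ℕ} (hκ : 0 < κ) :
    HasDegreeVia φ σ ((1 + y ^ κ) / x) (κ * e - d) := by
  rw [div_eq_mul_inv, sub_eq_add_neg]
  exact ((hy.pow κ).one_add (by positivity)).mul (hx.inv hφ)

end HasDegreeVia

end SpecializedDegree

def exchangeSeq {F : Type*} [Field F] (κ : ℕ) (a b : F) : ℕ → F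
  | 0 => a
  | 1 => b
  | n + 2 => (1 + exchangeSeq κ a b (n + 1) ^ κ) / exchangeSeq κ a b n

section exchangeSeq

variable {R K F : Type*} [CommRing R] [Semiring K] [NoZeroDivisors K] [Field F]
  {φ : R →+* F} {σ : R →+* K[X]}

lemma exchangeSeq_add_two (κ : ℕ) (a b : F) (n : ℕ) :
    exchangeSeq κ a b (n + 2) = (1 + exchangeSeq κ a b (n + 1) ^ κ) / exchangeSeq κ a b n :=
  rfl

/-- The degrees `cₙ` satisfy `cₙ₊₂ = κ cₙ₊₁ - cₙ`, so they increase as soon as `κ ≥ 2`. -/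
lemma exists_hasDegreeVia_exchangeSeq (hφ : Function.Injective φ) {κ : ℕ} (hκ : 2 ≤ κ)
    {a b : F} {d₀ e₀ : ℤ} (ha : HasDegreeVia φ σ a d₀) (hb : HasDegreeVia φ σ b e₀)
    (hd₀ : 0 < d₀) (hde₀ : d₀ < e₀) :
    ∀ n : ℕ, ∃ d e : ℤ, HasDegreeVia φ σ (exchangeSeq κ a b n) d ∧
      HasDegreeVia φ σ (exchangeSeq κ a b (n + 1)) e ∧ (n : ℤ) < d ∧ d < e
  | 0 => ⟨d₀, e₀, ha, hb, by simpa using hd₀, hde₀⟩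
  | n + 1 => by
    obtain ⟨d, e, hx, hy, hnd, hde⟩ := exists_hasDegreeVia_exchangeSeq hφ hκ ha hb hd₀ hde₀ n
    have hκ' : (2 : ℤ) ≤ κ := by exact_mod_cast hκ
    refine ⟨e, κ * e - d, hy, ?_, by push_cast; omega, by nlinarith⟩
    rw [exchangeSeq_add_two]
    exact hx.exchange hφ hy (by omega) (by omega)

end exchangeSeq

section mutation

variable {F : Type*} [Field F]

lemma mutate2_one_mutate2_zero {k : ℤ} (hk : 0 ≤ k) (v : Fin 2 → F) :
    mutate2 1 (mutate2 0 (k, v)) =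
      (k, ![(1 + v 1 ^ k.toNat) / v 0, (1 + ((1 + v 1 ^ k.toNat) / v 0) ^ k.toNat) / v 1]) := by
  have h : (-k).toNat = 0 := Int.toNat_of_nonpos (by omega)
  ext i
  · simp [mutate2]
  · fin_cases i <;> simp [mutate2, h]

lemma iterate_mutate2_eq_exchangeSeq {k : ℤ} (hk : 0 ≤ k) (v : Fin 2 → F) (n : ℕ) :
    (fun s : Seed2' F => mutate2 1 (mutate2 0 s))^[n] (k, v) =
      (k, ![exchangeSeq k.toNat (v 0) (v 1) (2 * n),
        exchangeSeq k.toNat (v 0) (v 1) (2 * n + 1)]) := by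
  induction n with
  | zero =>
    ext i
    · rfl
    · fin_cases i <;> rfl
  | succ n ih =>
    rw [Function.iterate_succ_apply', ih, mutate2_one_mutate2_zero hk]
    rfl

end mutation

/-- For the rank 2 quiver with `k ≥ 2` arrows `i → j`, no power `(μᵢμⱼ)^N`
with `N ≥ 1` fixes the labelled seed; hence its mutation class is infinite. -/
theorem rank2_no_periodicity {F : Type*} [Field F] [Algebra ℂ F]
    (k : ℤ) (hk : 2 ≤ k)
    (β : Fin 2 → F) (hind : AlgebraicIndependent ℂ β)
    (N : ℕ) (hN : 1 ≤ N) :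
    (fun s : Seed2' F => mutate2 1 (mutate2 0 s))^[N] (k, β) ≠ (k, β) := by
  intro hfix
  let φ : MvPolynomial (Fin 2) ℂ →+* F := (MvPolynomial.aeval β).toRingHom
  let σ : MvPolynomial (Fin 2) ℂ →+* ℂ[X] := (MvPolynomial.aeval ![X, X ^ 2]).toRingHom
  have hφ : Function.Injective φ := algebraicIndependent_iff_injective_aeval.1 hind
  have h₀ : HasDegreeVia φ σ (β 0) 1 := by
    simpa [φ, σ] using hasDegreeVia_apply (φ := φ) (σ := σ) (p := MvPolynomial.X 0) (by simp [σ])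
  have h₁ : HasDegreeVia φ σ (β 1) 2 := by
    simpa [φ, σ] using hasDegreeVia_apply (φ := φ) (σ := σ) (p := MvPolynomial.X 1) (by simp [σ])
  obtain ⟨d, -, hd, -, hNd, -⟩ :=
    exists_hasDegreeVia_exchangeSeq hφ (κ := k.toNat) (by omega) h₀ h₁ one_pos one_lt_two (2 * N)
  have hx : exchangeSeq k.toNat (β 0) (β 1) (2 * N) = β 0 := by
    simpa using congrArg (fun s => s.2 0)
      ((iterate_mutate2_eq_exchangeSeq (by omega) β N).symm.trans hfix)
  rw [hx] at hd
  have := hd.unique hφ h₀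
  omega
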